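/- arXiv:1909.03387 — 2 statements merged into one kernel-verified Lean document; each statement's English description precedes it below -/
import Mathlib

section
/- The locally convex cones (Q_j, V) for each j ∈ ℕ, and (P, V), are barreled: for every barrel B and every element b there exist v ∈ V and λ > 0 such that (a,b) ∈ λB for all a in the symmetric neighborhood v(b)v. -/
open scoped NNReal ENNReal

/-- The positive reals, used for the values `a` in elements `a_i`. -/
abbrev Rpos := {a : ℝ // 0 < a}

/-- The cone `P = {a_i : a ∈ (0,∞), i ∈ ℕ} ∪ {0₀, ∞_∞}`. -/
inductive CP : Type where
  | zero : CP
  | inf : CP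
  | elt : Rpos → ℕ+ → CP

namespace CP

/-- Addition on `P`. -/
def add : CP → CP → CP
  | zero, x => x
  | x, zero => x
  | inf, _ => inf
  | _, inf => inf
  | elt a i, elt b j =>
      if i = j then elt ⟨a.1 + b.1, add_pos a.2 b.2⟩ i else inf

/-- Scalar multiplication by nonnegative reals on `P`. -/
noncomputable def smul (r : ℝ≥0) (x : CP) : CP :=
  if h : r = 0 then zero
  else
    match x with
    | zero => zero
    | inf => inf
    | elt a i => elt ⟨(r : ℝ) * a.1,
        mul_pos (by exact_mod_cast pos_iff_ne_zero.mpr h) a.2⟩ i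

/-- The preorder on `P`: `a_i ⪯ b_j` iff `i = j` and `a ≤ b`. -/
def le : CP → CP → Prop
  | zero, zero => True
  | inf, inf => True
  | elt a i, elt b j => i = j ∧ a.1 ≤ b.1
  | _, _ => False

/-- The neighborhood relation: `nrel v x y` means `x ⪯ y + v`. -/
def nrel (v : ℝ) : CP → CP → Prop
  | zero, _ => True
  | _, inf => True
  | elt a i, elt b j => i = j ∧ a.1 ≤ b.1 + (i : ℝ) * v
  | _, _ => False

/-- The subcone `Q_j = {b_j : b ∈ (0,∞)} ∪ {0₀, ∞_∞}`. -/
def Q (j : ℕ+) : Set CP := {x | x = zero ∨ x = inf ∨ ∃ a : Rpos, x = elt a j}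

/-- Symmetric neighborhood of `b` relative to the subcone `Qs`. -/
def symN (Qs : Set CP) (v : ℝ) (b : CP) : Set CP :=
  {a ∈ Qs | nrel v a b ∧ nrel v b a}

/-- Linearity of a functional `μ : P → ℝ ∪ {+∞}` relative to a subcone. -/
def IsLinearOn (Qs : Set CP) (μ : CP → EReal) : Prop :=
  μ zero = 0 ∧ (∀ x, μ x ≠ ⊥) ∧
  (∀ x ∈ Qs, ∀ y ∈ Qs, μ (add x y) = μ x + μ y) ∧
  (∀ r : ℝ≥0, ∀ x ∈ Qs, μ (smul r x) = ((r : ℝ) : EReal) * μ x)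

/-- (Uniform) continuity of a functional relative to a subcone. -/
def IsContOn (Qs : Set CP) (μ : CP → EReal) : Prop :=
  ∃ v : ℝ, 0 < v ∧ ∀ x ∈ Qs, ∀ y ∈ Qs, nrel v x y → μ x ≤ μ y + 1

/-- Membership in the dual cone of the subcone `Qs`. -/
def InDualOn (Qs : Set CP) (μ : CP → EReal) : Prop :=
  IsLinearOn Qs μ ∧ IsContOn Qs μ

/-- `λ B = {(λx, λy) : (x,y) ∈ B}`. -/
def scaleSet (l : ℝ≥0) (B : Set (CP × CP)) : Set (CP × CP) :=
  (fun p => (smul l p.1, smul l p.2)) '' B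

/-- `B` is a barrel in the subcone `Qs`. -/
def IsBarrelOn (Qs : Set CP) (B : Set (CP × CP)) : Prop :=
  (∀ p ∈ B, p.1 ∈ Qs ∧ p.2 ∈ Qs) ∧
  (∀ p ∈ B, ∀ q ∈ B, ∀ t : ℝ≥0, t ≤ 1 →
     (add (smul t p.1) (smul (1 - t) q.1),
      add (smul t p.2) (smul (1 - t) q.2)) ∈ B) ∧
  (∀ b ∈ Qs, ∃ v : ℝ, 0 < v ∧ ∀ a ∈ symN Qs v b,
     ∃ l : ℝ≥0, 0 < l ∧ (a, b) ∈ scaleSet l B) ∧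
  (∀ a ∈ Qs, ∀ b ∈ Qs, (a, b) ∉ B → ∃ μ : CP → EReal, InDualOn Qs μ ∧
     μ b + 1 < μ a ∧ ∀ p ∈ B, μ p.1 ≤ μ p.2 + 1)

/-- The subcone `Qs` is barreled. -/
def BarreledOn (Qs : Set CP) : Prop :=
  ∀ B, IsBarrelOn Qs B → ∀ b ∈ Qs, ∃ v : ℝ, 0 < v ∧ ∃ l : ℝ≥0, 0 < l ∧
    ∀ a ∈ symN Qs v b, (a, b) ∈ scaleSet l B

/-- The subcone `Qs` is upper-barreled. -/
def UpperBarreledOn (Qs : Set CP) : Prop :=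
  ∀ B, IsBarrelOn Qs B → ∃ v : ℝ, 0 < v ∧
    ∀ p : CP × CP, p.1 ∈ Qs → p.2 ∈ Qs → nrel v p.1 p.2 → p ∈ B

/-- The functional `∞̄` (resp. its extension `∞̄~`). -/
noncomputable def fnBarInf : CP → EReal
  | zero => 0
  | _ => ⊤

/-- The functional `0̄_k` (resp. its extension). -/
noncomputable def fnBarZero (k : ℕ+) : CP → EReal
  | zero => 0
  | inf => ⊤
  | elt _ i => if i = k then 0 else ⊤

/-- The functional `c_k : a_k ↦ c·a` (extended by `+∞` off `Q_k`). -/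
noncomputable def fnLam (c : ℝ) (k : ℕ+) : CP → EReal
  | zero => 0
  | inf => ⊤
  | elt a i => if i = k then ((c * a.1 : ℝ) : EReal) else ⊤

/-- The zero functional. -/
noncomputable def fnZero : CP → EReal := fun _ => 0

/-- The barrel `B_j = {(x,y) ∈ Q_j² : x ⪯ y + w/j}`. -/
def Bset (w : ℝ) (j : ℕ+) : Set (CP × CP) :=
  {p | p.1 ∈ Q j ∧ p.2 ∈ Q j ∧ nrel (w / (j : ℝ)) p.1 p.2}

/-- The barrel `B = ⋃_j B_j`. -/
def BigB (w : ℝ) : Set (CP × CP) := ⋃ (j : ℕ+), Bset w j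

/-- The map `Λ : Q_j → [0,∞]`, `a_j ↦ a/j`. -/
noncomputable def Lam (j : ℕ+) : CP → ℝ≥0∞
  | zero => 0
  | inf => ⊤
  | elt a _ => ENNReal.ofReal (a.1 / (j : ℝ))

/-!
Each symmetric neighbourhood `v(b)v` has a `⪯`-greatest element `e` (`b` itself for `0₀` and
`∞_∞`, `(b + jv)_j` for `b_j`). A barrel is `⪯`-downward closed in its first coordinate: a dual
functional `μ` separating `(x', y)` from `B` is monotone, since continuity applied to
`n x' ⪯ n x` gives `n μ x' ≤ n μ x + 1` for all `n`. So the `λ` absorbing the single pair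
`(e, b)` absorbs the whole neighbourhood.
-/

protected lemma smul_zero (r : ℝ≥0) : smul r zero = zero := by
  by_cases hr : r = 0 <;> simp [smul, hr]

protected lemma one_smul (x : CP) : smul 1 x = x := by
  cases x <;> simp [smul]

protected lemma smul_smul (r s : ℝ≥0) (x : CP) : smul r (smul s x) = smul (r * s) x := by
  by_cases hr : r = 0
  · simp [smul, hr]
  by_cases hs : s = 0
  · simp [smul, hs]
  cases x with
  | zero => simp [CP.smul_zero]
  | inf => simp [smul, hr, hs]
  | elt a i => simp [smul, hr, hs, mul_assoc]

protected lemma smul_inv_smul₀ {l : ℝ≥0} (hl : l ≠ 0) (x : CP) : smul l (smul l⁻¹ x) = x := by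
  rw [CP.smul_smul, mul_inv_cancel₀ hl, CP.one_smul]

protected lemma inv_smul_smul₀ {l : ℝ≥0} (hl : l ≠ 0) (x : CP) : smul l⁻¹ (smul l x) = x := by
  rw [CP.smul_smul, inv_mul_cancel₀ hl, CP.one_smul]

lemma nrel_of_le {v : ℝ} (hv : 0 ≤ v) {x y : CP} (h : le x y) : nrel v x y := by
  cases x <;> cases y <;> simp only [le, nrel] at h ⊢
  exact ⟨h.1, h.2.trans (le_add_of_nonneg_right (by positivity))⟩

protected lemma smul_le_smul (r : ℝ≥0) {x y : CP} (h : le x y) : le (smul r x) (smul r y) := by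
  by_cases hr : r = 0
  · simp [smul, hr, le]
  cases x <;> cases y <;> simp_all [smul, le]
  exact mul_le_mul_of_nonneg_left h.2 r.2

lemma _root_.EReal.le_of_forall_natCast_mul_le_mul_add_one {a b : EReal}
    (h : ∀ n : ℕ, (n : EReal) * a ≤ n * b + 1) : a ≤ b := by
  have h1 : a ≤ b + 1 := by simpa using h 1
  induction b using EReal.rec with
  | bot => simpa using h1
  | top => exact le_top
  | coe c =>
    induction a using EReal.rec with
    | bot => exact bot_le
    | top => exact absurd h1 (not_le.mpr (by exact_mod_cast EReal.coe_lt_top (c + 1)))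
    | coe d =>
      rw [EReal.coe_le_coe_iff]
      by_contra! hcd
      obtain ⟨n, hn⟩ := exists_nat_gt (1 / (d - c))
      have hn' : (n : ℝ) * d ≤ n * c + 1 := by exact_mod_cast h n
      have : 1 < (n : ℝ) * (d - c) := by rwa [div_lt_iff₀ (by linarith)] at hn
      linarith

def IsSmulClosed (Qs : Set CP) : Prop := ∀ (r : ℝ≥0), ∀ x ∈ Qs, smul r x ∈ Qs

lemma InDualOn.monotone {Qs : Set CP} (hQs : IsSmulClosed Qs) {μ : CP → EReal}
    (hμ : InDualOn Qs μ) {x y : CP} (hx : x ∈ Qs) (hy : y ∈ Qs) (hxy : le x y) : μ x ≤ μ y := by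
  obtain ⟨⟨-, -, -, hsmul⟩, w, hw, hcont⟩ := hμ
  refine EReal.le_of_forall_natCast_mul_le_mul_add_one fun n => ?_
  have := hcont _ (hQs n x hx) _ (hQs n y hy) (nrel_of_le hw.le (CP.smul_le_smul n hxy))
  simpa [hsmul n x hx, hsmul n y hy] using this

lemma IsBarrelOn.mem_of_le_fst {Qs : Set CP} (hQs : IsSmulClosed Qs) {B : Set (CP × CP)}
    (hB : IsBarrelOn Qs B) {x x' y : CP} (hxy : (x, y) ∈ B) (hx' : x' ∈ Qs) (h : le x' x) :
    (x', y) ∈ B := by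
  by_contra hx'y
  obtain ⟨hxQs, hyQs⟩ := hB.1 _ hxy
  obtain ⟨μ, hμ, hsep, hμB⟩ := hB.2.2.2 x' hx' y hyQs hx'y
  exact (hsep.trans_le ((hμ.monotone hQs hx' hxQs h).trans (hμB _ hxy))).false

lemma IsBarrelOn.mem_scaleSet_of_le_fst {Qs : Set CP} (hQs : IsSmulClosed Qs)
    {B : Set (CP × CP)} (hB : IsBarrelOn Qs B) {l : ℝ≥0} (hl : l ≠ 0) {x x' y : CP}
    (hxy : (x, y) ∈ scaleSet l B) (hx' : x' ∈ Qs) (h : le x' x) : (x', y) ∈ scaleSet l B := by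
  obtain ⟨⟨p₁, p₂⟩, hp, hpxy⟩ := hxy
  obtain ⟨rfl, rfl⟩ := Prod.mk.inj hpxy
  have hle : le (smul l⁻¹ x') p₁ := by
    simpa only [CP.inv_smul_smul₀ hl] using CP.smul_le_smul l⁻¹ h
  exact ⟨(smul l⁻¹ x', p₂), hB.mem_of_le_fst hQs hp (hQs _ _ hx') hle,
    by simp only [CP.smul_inv_smul₀ hl]⟩

lemma exists_greatest_mem_symN {Qs : Set CP}
    (hfibre : ∀ a i, elt a i ∈ Qs → ∀ a', elt a' i ∈ Qs) {v : ℝ} (hv : 0 < v) {b : CP}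
    (hb : b ∈ Qs) : ∃ e ∈ symN Qs v b, ∀ a ∈ symN Qs v b, le a e := by
  cases b with
  | zero =>
    refine ⟨zero, ⟨hb, trivial, trivial⟩, fun a ⟨_, hab, _⟩ => ?_⟩
    cases a <;> simp_all [nrel, le]
  | inf =>
    refine ⟨inf, ⟨hb, trivial, trivial⟩, fun a ⟨_, _, hba⟩ => ?_⟩
    cases a <;> simp_all [nrel, le]
  | elt b j =>
    have hjv : (0 : ℝ) < j * v := mul_pos (by positivity) hv
    refine ⟨elt ⟨b + j * v, add_pos b.2 hjv⟩ j,
      ⟨hfibre b j hb _, ⟨rfl, le_rfl⟩, ⟨rfl, by simp only; linarith⟩⟩, fun a ⟨_, hab, hba⟩ => ?_⟩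
    cases a with
    | zero => simp [nrel] at hba
    | inf => simp [nrel] at hab
    | elt a i =>
      obtain ⟨rfl, hab⟩ := hab
      exact ⟨rfl, hab⟩

theorem barreledOn_of_isSmulClosed {Qs : Set CP} (hQs : IsSmulClosed Qs)
    (hfibre : ∀ a i, elt a i ∈ Qs → ∀ a', elt a' i ∈ Qs) : BarreledOn Qs := by
  intro B hB b hb
  obtain ⟨v, hv, hB_absorb⟩ := hB.2.2.1 b hb
  obtain ⟨e, he, he_greatest⟩ := exists_greatest_mem_symN hfibre hv hb
  obtain ⟨l, hl, heb⟩ := hB_absorb e he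
  exact ⟨v, hv, l, hl, fun a ha =>
    hB.mem_scaleSet_of_le_fst hQs hl.ne' heb ha.1 (he_greatest a ha)⟩

lemma elt_mem_Q_iff {a : Rpos} {i j : ℕ+} : elt a i ∈ Q j ↔ i = j := by
  simp [Q]

lemma isSmulClosed_Q (j : ℕ+) : IsSmulClosed (Q j) := by
  rintro r x (rfl | rfl | ⟨a, rfl⟩) <;> by_cases hr : r = 0 <;> simp [Q, smul, hr]
  exact mul_pos (NNReal.coe_pos.mpr (pos_iff_ne_zero.mpr hr)) a.2

/-- the locally convex cones `(Q_j, V)` (for every `j ∈ ℕ`) and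
`(P, V)` are barreled. -/
theorem stmt13 : (∀ j : ℕ+, BarreledOn (Q j)) ∧ BarreledOn Set.univ := by
  refine ⟨fun j => barreledOn_of_isSmulClosed (isSmulClosed_Q j) ?_,
    barreledOn_of_isSmulClosed (fun _ _ _ => trivial) (fun _ _ _ _ => trivial)⟩
  exact fun _ _ h _ => elt_mem_Q_iff.mpr (elt_mem_Q_iff.mp h)

end CP
end

section
/- For fixed w > 0, the set B = ⋃_{j ∈ ℕ} B_j with B_j = {(x,y) ∈ Q_j × Q_j : x ⪯ y + w/j} satisfies barrel condition (B2) in (P,V): for every (a_i, b_j) ∉ B there is μ ∈ P* with μ(a_i) > μ(b_j) + 1 and μ(c) ≤ μ(d) + 1 for all (c,d) ∈ B. The separating functional can be taken to be ∞̄~ when b_j = 0₀, (1/w)~_i when i = j, and (1/w)~_j when i ≠ j with i,j ∉ {0,∞}. -/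
/-!
Membership in `B` is decided pairwise: `(x, y) ∈ B` iff `x = 0₀`, `y = ∞_∞`, or `x = a_i`,
`y = b_i` with `a ≤ b + w`, because the index cancels in `i · (w / i)`. A pair outside `B` thus
has either `y = 0₀ ≠ x`, which `∞̄~` separates, or `y = b_j`. In the latter case `(1/w)~_j` is
`+∞` at `x` unless `x = a_j` with `a > b + w`, where it exceeds its value at `b_j` by more than
one; on `B` it grows by at most `w · (1/w) = 1`.
-/

open scoped NNReal ENNReal

namespace CP

@[simp]
theorem _root_.EReal.top_add_one : (⊤ : EReal) + 1 = ⊤ :=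
  EReal.top_add_of_ne_bot (EReal.coe_ne_bot 1)

@[simp]
theorem _root_.EReal.one_ne_top : (1 : EReal) ≠ ⊤ := EReal.coe_ne_top 1

theorem add_zero_left (x : CP) : add zero x = x := by cases x <;> rfl

theorem add_zero_right (x : CP) : add x zero = x := by cases x <;> rfl

theorem add_inf_left (x : CP) : add inf x = inf := by cases x <;> rfl

theorem add_inf_right (x : CP) : add x inf = inf := by cases x <;> rfl

theorem add_elt_elt (a b : Rpos) (i j : ℕ+) :
    add (elt a i) (elt b j) = if i = j then elt ⟨a + b, add_pos a.2 b.2⟩ i else inf := rfl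

theorem smul_zero_left (x : CP) : smul 0 x = zero := dif_pos rfl

theorem smul_zero_right {r : ℝ≥0} (hr : r ≠ 0) : smul r zero = zero := dif_neg hr

theorem smul_inf {r : ℝ≥0} (hr : r ≠ 0) : smul r inf = inf := dif_neg hr

theorem smul_elt {r : ℝ≥0} (hr : r ≠ 0) (a : Rpos) (i : ℕ+) :
    smul r (elt a i) = elt ⟨r * a, mul_pos (NNReal.coe_pos.2 (pos_iff_ne_zero.2 hr)) a.2⟩ i :=
  dif_neg hr

theorem nrel_iff {v : ℝ} {x y : CP} :
    nrel v x y ↔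
      x = zero ∨ y = inf ∨ ∃ a b i, x = elt a i ∧ y = elt b i ∧ a.1 ≤ b.1 + i * v := by
  rcases x with _ | _ | ⟨a, i⟩ <;> rcases y with _ | _ | ⟨b, j⟩ <;> simp [nrel]
  exact fun _ => eq_comm

theorem mem_BigB_iff {w : ℝ} {x y : CP} :
    (x, y) ∈ BigB w ↔
      x = zero ∨ y = inf ∨ ∃ a b i, x = elt a i ∧ y = elt b i ∧ a.1 ≤ b.1 + w := by
  rcases x with _ | _ | ⟨a, i⟩ <;> rcases y with _ | _ | ⟨b, j⟩ <;>
    simp [BigB, Bset, Q, nrel, mul_div_cancel₀]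
  exact fun h _ => h.symm

theorem isLinearOn_univ_of_elt {μ : CP → EReal} (h0 : μ zero = 0) (hinf : μ inf = ⊤)
    (hbot : ∀ a i, μ (elt a i) ≠ ⊥)
    (hadd : ∀ a b i j, μ (add (elt a i) (elt b j)) = μ (elt a i) + μ (elt b j))
    (hsmul : ∀ r : ℝ≥0, r ≠ 0 → ∀ a i,
      μ (smul r (elt a i)) = ((r : ℝ) : EReal) * μ (elt a i)) :
    IsLinearOn Set.univ μ := by
  have hne : ∀ x, μ x ≠ ⊥ := by
    rintro (_ | _ | ⟨a, i⟩)
    · simp [h0]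
    · simp [hinf]
    · exact hbot a i
  refine ⟨h0, hne, fun x _ y _ => ?_, fun r x _ => ?_⟩
  · rcases x with _ | _ | ⟨a, i⟩
    · rw [add_zero_left, h0, zero_add]
    · rw [add_inf_left, hinf, EReal.top_add_of_ne_bot (hne y)]
    · rcases y with _ | _ | ⟨b, j⟩
      · rw [add_zero_right, h0, add_zero]
      · rw [add_inf_right, hinf, EReal.add_top_of_ne_bot (hne _)]
      · exact hadd a b i j
  · rcases eq_or_ne r 0 with rfl | hr
    · rw [smul_zero_left, h0, NNReal.coe_zero, EReal.coe_zero, zero_mul]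
    · rcases x with _ | _ | ⟨a, i⟩
      · rw [smul_zero_right hr, h0, mul_zero]
      · rw [smul_inf hr, hinf,
          EReal.mul_top_of_pos (by exact_mod_cast pos_iff_ne_zero.2 hr)]
      · exact hsmul r hr a i

theorem fnBarInf_eq_top {x : CP} (hx : x ≠ zero) : fnBarInf x = ⊤ := by
  cases x
  · exact absurd rfl hx
  all_goals rfl

theorem fnBarInf_le_add_one_iff {x y : CP} :
    fnBarInf x ≤ fnBarInf y + 1 ↔ x = zero ∨ y ≠ zero := by
  rcases x with _ | _ | ⟨a, i⟩ <;> rcases y with _ | _ | ⟨b, j⟩ <;> simp [fnBarInf]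

theorem inDualOn_fnBarInf : InDualOn Set.univ fnBarInf := by
  refine ⟨isLinearOn_univ_of_elt rfl rfl (fun _ _ => by simp [fnBarInf]) (fun a b i j => ?_)
    (fun r hr a i => ?_), 1, one_pos, fun x _ y _ hxy => fnBarInf_le_add_one_iff.2 ?_⟩
  · rw [fnBarInf_eq_top (by rw [add_elt_elt]; split_ifs <;> simp)]
    rfl
  · rw [smul_elt hr, fnBarInf_eq_top (by simp), fnBarInf_eq_top (by simp),
      EReal.mul_top_of_pos (by exact_mod_cast pos_iff_ne_zero.2 hr)]
  · rcases nrel_iff.1 hxy with h | rfl | ⟨a, b, i, -, rfl, -⟩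
    · exact Or.inl h
    all_goals simp

theorem fnBarInf_le_add_one_of_mem_BigB {w : ℝ} {x y : CP} (h : (x, y) ∈ BigB w) :
    fnBarInf x ≤ fnBarInf y + 1 := by
  refine fnBarInf_le_add_one_iff.2 ?_
  rcases mem_BigB_iff.1 h with h | rfl | ⟨a, b, i, -, rfl, -⟩
  · exact Or.inl h
  all_goals simp

theorem fnBarInf_zero_add_one_lt {x : CP} (hx : x ≠ zero) : fnBarInf zero + 1 < fnBarInf x := by
  rw [fnBarInf_eq_top hx, fnBarInf, zero_add]
  exact EReal.coe_lt_top 1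

section fnLam

variable (c : ℝ) (k : ℕ+)

theorem fnLam_elt_self (a : Rpos) : fnLam c k (elt a k) = ((c * a : ℝ) : EReal) := if_pos rfl

theorem fnLam_elt_of_ne {i : ℕ+} (a : Rpos) (h : i ≠ k) : fnLam c k (elt a i) = ⊤ := if_neg h

theorem fnLam_ne_bot (x : CP) : fnLam c k x ≠ ⊥ := by
  rcases x with _ | _ | ⟨a, i⟩
  · simp [fnLam]
  · simp [fnLam]
  · rcases eq_or_ne i k with rfl | h
    · rw [fnLam_elt_self]; exact EReal.coe_ne_bot _
    · simp [fnLam_elt_of_ne c k a h]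

theorem fnLam_add_elt_elt (a b : Rpos) (i j : ℕ+) :
    fnLam c k (add (elt a i) (elt b j)) = fnLam c k (elt a i) + fnLam c k (elt b j) := by
  rw [add_elt_elt]
  split_ifs with hij
  · subst hij
    rcases eq_or_ne i k with rfl | hik
    · simp only [fnLam_elt_self, mul_add, EReal.coe_add]
    · simp only [fnLam_elt_of_ne c k _ hik, EReal.top_add_top]
  · rcases eq_or_ne i k with rfl | hik
    · rw [fnLam_elt_of_ne c i b (Ne.symm hij), EReal.add_top_of_ne_bot (fnLam_ne_bot c i _)]
      rfl
    · rw [fnLam_elt_of_ne c k a hik, EReal.top_add_of_ne_bot (fnLam_ne_bot c k _)]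
      rfl

theorem fnLam_smul_elt {r : ℝ≥0} (hr : r ≠ 0) (a : Rpos) (i : ℕ+) :
    fnLam c k (smul r (elt a i)) = ((r : ℝ) : EReal) * fnLam c k (elt a i) := by
  rw [smul_elt hr]
  rcases eq_or_ne i k with rfl | hik
  · simp only [fnLam_elt_self, ← EReal.coe_mul, mul_left_comm]
  · rw [fnLam_elt_of_ne c k _ hik, fnLam_elt_of_ne c k _ hik,
      EReal.mul_top_of_pos (by exact_mod_cast pos_iff_ne_zero.2 hr)]

theorem isLinearOn_fnLam : IsLinearOn Set.univ (fnLam c k) :=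
  isLinearOn_univ_of_elt rfl rfl (fun _ _ => fnLam_ne_bot c k _) (fnLam_add_elt_elt c k)
    (fun _ hr => fnLam_smul_elt c k hr)

variable {c}

theorem fnLam_nonneg (hc : 0 ≤ c) (x : CP) : 0 ≤ fnLam c k x := by
  rcases x with _ | _ | ⟨a, i⟩
  · exact le_rfl
  · exact le_top
  · rcases eq_or_ne i k with rfl | h
    · rw [fnLam_elt_self]; exact_mod_cast mul_nonneg hc a.2.le
    · rw [fnLam_elt_of_ne c k a h]; exact le_top

theorem fnLam_le_add_one (hc : 0 ≤ c) {x y : CP}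
    (h : x = zero ∨ y = inf ∨
      ∃ a b i, x = elt a i ∧ y = elt b i ∧ (i = k → c * a ≤ c * b + 1)) :
    fnLam c k x ≤ fnLam c k y + 1 := by
  rcases h with rfl | rfl | ⟨a, b, i, rfl, rfl, hab⟩
  · exact le_add_of_nonneg_of_le (fnLam_nonneg k hc y) zero_le_one
  · simp [fnLam]
  · rcases eq_or_ne i k with rfl | hik
    · rw [fnLam_elt_self, fnLam_elt_self]; exact_mod_cast hab rfl
    · simp [fnLam_elt_of_ne c k _ hik]

theorem isContOn_fnLam (hc : 0 < c) : IsContOn Set.univ (fnLam c k) := by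
  refine ⟨(c * k)⁻¹, by positivity, fun x _ y _ hxy => fnLam_le_add_one k hc.le ?_⟩
  refine (nrel_iff.1 hxy).imp_right (Or.imp_right ?_)
  rintro ⟨a, b, i, rfl, rfl, hab⟩
  refine ⟨a, b, i, rfl, rfl, ?_⟩
  rintro rfl
  calc c * a ≤ c * (b + i * (c * i)⁻¹) := by gcongr
    _ = c * b + 1 := by field_simp

theorem inDualOn_fnLam (hc : 0 < c) : InDualOn Set.univ (fnLam c k) :=
  ⟨isLinearOn_fnLam c k, isContOn_fnLam k hc⟩

theorem fnLam_le_add_one_of_mem_BigB {w : ℝ} (hc : 0 ≤ c) (hcw : c * w ≤ 1) {x y : CP}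
    (h : (x, y) ∈ BigB w) : fnLam c k x ≤ fnLam c k y + 1 := by
  refine fnLam_le_add_one k hc ((mem_BigB_iff.1 h).imp_right (Or.imp_right ?_))
  rintro ⟨a, b, i, rfl, rfl, hab⟩
  refine ⟨a, b, i, rfl, rfl, fun _ => ?_⟩
  calc c * a ≤ c * (b + w) := by gcongr
    _ ≤ c * b + 1 := by linarith [mul_add c b w]

theorem fnLam_elt_self_add_one_lt (b : Rpos) {x : CP} (hx : fnLam c k x = ⊤) :
    fnLam c k (elt b k) + 1 < fnLam c k x := by
  rw [fnLam_elt_self, hx]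
  exact_mod_cast EReal.coe_lt_top (c * b + 1)

end fnLam

theorem fnLam_inv_add_one_lt_of_not_mem_BigB {w : ℝ} (hw : 0 < w) {a b : Rpos} {i : ℕ+}
    (h : (elt a i, elt b i) ∉ BigB w) :
    fnLam w⁻¹ i (elt b i) + 1 < fnLam w⁻¹ i (elt a i) := by
  have hab : b.1 + w < a := by
    by_contra! hab
    exact h (mem_BigB_iff.2 (Or.inr (Or.inr ⟨a, b, i, rfl, rfl, hab⟩)))
  rw [fnLam_elt_self, fnLam_elt_self]
  exact_mod_cast calc w⁻¹ * b + 1 = w⁻¹ * (b + w) := by field_simp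
    _ < w⁻¹ * a := by gcongr

/-- `B = ⋃_j B_j` satisfies barrel condition (B2) in `(P, V)`;
the separating functional can be taken to be `∞̄~` when `b_j = 0₀`,
`(1/w)~_i` when `i = j`, and `(1/w)~_j` when `i ≠ j` with `i, j ∉ {0, ∞}`. -/
theorem stmt15 (w : ℝ) (hw : 0 < w) :
    (∀ x y : CP, (x, y) ∉ BigB w → ∃ μ : CP → EReal, InDualOn Set.univ μ ∧
      μ y + 1 < μ x ∧ ∀ p ∈ BigB w, μ p.1 ≤ μ p.2 + 1) ∧
    (∀ x : CP, (x, zero) ∉ BigB w →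
      fnBarInf zero + 1 < fnBarInf x ∧
      ∀ p ∈ BigB w, fnBarInf p.1 ≤ fnBarInf p.2 + 1) ∧
    (∀ (a b : Rpos) (i : ℕ+), (elt a i, elt b i) ∉ BigB w →
      fnLam w⁻¹ i (elt b i) + 1 < fnLam w⁻¹ i (elt a i) ∧
      ∀ p ∈ BigB w, fnLam w⁻¹ i p.1 ≤ fnLam w⁻¹ i p.2 + 1) ∧
    (∀ (a b : Rpos) (i j : ℕ+), i ≠ j → (elt a i, elt b j) ∉ BigB w →
      fnLam w⁻¹ j (elt b j) + 1 < fnLam w⁻¹ j (elt a i) ∧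
      ∀ p ∈ BigB w, fnLam w⁻¹ j p.1 ≤ fnLam w⁻¹ j p.2 + 1) := by
  have hB (k : ℕ+) (p : CP × CP) (hp : p ∈ BigB w) :=
    fnLam_le_add_one_of_mem_BigB k (inv_nonneg.2 hw.le) (inv_mul_cancel₀ hw.ne').le hp
  have hZero (x : CP) (hx : (x, zero) ∉ BigB w) :=
    And.intro (fnBarInf_zero_add_one_lt fun h => hx (mem_BigB_iff.2 (Or.inl h)))
      fun (p : CP × CP) (hp : p ∈ BigB w) => fnBarInf_le_add_one_of_mem_BigB hp
  have hSame (a b : Rpos) (i : ℕ+) (h : (elt a i, elt b i) ∉ BigB w) :=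
    And.intro (fnLam_inv_add_one_lt_of_not_mem_BigB hw h) (hB i)
  have hCross (a b : Rpos) (i j : ℕ+) (hij : i ≠ j) (_ : (elt a i, elt b j) ∉ BigB w) :=
    And.intro (fnLam_elt_self_add_one_lt j b (fnLam_elt_of_ne w⁻¹ j a hij)) (hB j)
  refine ⟨fun x y hxy => ?_, hZero, hSame, hCross⟩
  rcases y with _ | _ | ⟨b, j⟩
  · exact ⟨fnBarInf, inDualOn_fnBarInf, hZero x hxy⟩
  · exact absurd (mem_BigB_iff.2 (Or.inr (Or.inl rfl))) hxy
  · refine ⟨fnLam w⁻¹ j, inDualOn_fnLam j (inv_pos.2 hw), ?_⟩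
    rcases x with _ | _ | ⟨a, i⟩
    · exact absurd (mem_BigB_iff.2 (Or.inl rfl)) hxy
    · exact ⟨fnLam_elt_self_add_one_lt j b rfl, hB j⟩
    · rcases eq_or_ne i j with rfl | hij
      · exact hSame a b i hxy
      · exact hCross a b i j hij hxy

end CP
end
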